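/- Let 0 < c < 1 and β = 2/c − 1. Define ψ(x) = (1−x)^{β(1−x)} (1−y)^{β(1−y)} / (x^x y^y) for 0 ≤ x ≤ c, where y = c − x (with the convention 0^0 = 1). Then ψ attains its minimum on [0, c] at the endpoints: ψ(x) ≥ ψ(0) = ψ(c) = (1−c)^{β(1−c)} / c^c for all 0 ≤ x ≤ c. -/

import Mathlib

/-- The function `ψ(x) = (1-x)^(β(1-x)) (1-y)^(β(1-y)) / (x^x y^y)` with
`y = c - x`, using real powers (`Real.rpow`, so that `0^0 = 1`). -/
noncomputable def psiFn (c β x : ℝ) : ℝ :=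
  ((1 - x) ^ (β * (1 - x)) * (1 - (c - x)) ^ (β * (1 - (c - x)))) /
    (x ^ x * (c - x) ^ (c - x))

/-!
`log ψ` is symmetric about `x = c/2`, so it suffices to show that it increases on `[0, c/2]`.
With `h(s) = c log s + (2 - c) log (1 - s)` (`logBetaKernel c`) and `β c = 2 - c`, one has
`c (log ψ)'(x) = h(c - x) - h(x)`. The function `t ↦ h(c - t) - h(t)` vanishes at `c/2` and
is decreasing, because `h'(t) + h'(c - t) = (1 - c)(c - 2t)² / (t (c - t) (1 - t) (1 - c + t))`;
hence it is nonnegative on `(0, c/2]`.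
-/

open Real Set

noncomputable def logPsi (c β x : ℝ) : ℝ :=
  β * ((1 - x) * log (1 - x)) + β * ((1 - (c - x)) * log (1 - (c - x)))
    - x * log x - (c - x) * log (c - x)

noncomputable def logBetaKernel (c s : ℝ) : ℝ :=
  c * log s + (2 - c) * log (1 - s)

theorem rpow_self_eq_exp_mul_log {x : ℝ} (hx : 0 ≤ x) : x ^ x = exp (x * log x) := by
  rcases hx.eq_or_lt with rfl | hx
  · simp
  · rw [rpow_def_of_pos hx, mul_comm]

theorem psiFn_zero (c β : ℝ) : psiFn c β 0 = (1 - c) ^ (β * (1 - c)) / c ^ c := by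
  simp [psiFn]

theorem psiFn_self (c β : ℝ) : psiFn c β c = (1 - c) ^ (β * (1 - c)) / c ^ c := by
  simp [psiFn, mul_comm]

theorem psiFn_sub_self (c β x : ℝ) : psiFn c β (c - x) = psiFn c β x := by
  simp only [psiFn, sub_sub_cancel]
  ring

theorem psiFn_eq_exp_logPsi {c β x : ℝ} (hc : c < 1) (hx : x ∈ Icc 0 c) :
    psiFn c β x = exp (logPsi c β x) := by
  rw [psiFn, rpow_def_of_pos (by linarith [hx.2]), rpow_def_of_pos (by linarith [hx.1]),
    rpow_self_eq_exp_mul_log hx.1, rpow_self_eq_exp_mul_log (sub_nonneg.2 hx.2),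
    ← exp_add, ← exp_add, ← exp_sub, logPsi]
  ring_nf

theorem continuous_logPsi (c β : ℝ) : Continuous (logPsi c β) := by
  unfold logPsi
  fun_prop

theorem hasDerivAt_logPsi {c β x : ℝ} (hx : x ≠ 0) (hy : c - x ≠ 0) (h1x : 1 - x ≠ 0)
    (h1y : 1 - (c - x) ≠ 0) :
    HasDerivAt (logPsi c β)
      (β * (log (1 - (c - x)) - log (1 - x)) + (log (c - x) - log x)) x := by
  have d1x := (hasDerivAt_mul_log h1x).comp x ((hasDerivAt_id x).const_sub 1)
  have d1y := (hasDerivAt_mul_log h1y).comp x (((hasDerivAt_id x).const_sub c).const_sub 1)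
  have dx := hasDerivAt_mul_log hx
  have dy := (hasDerivAt_mul_log hy).comp x ((hasDerivAt_id x).const_sub c)
  refine ((((d1x.const_mul β).add (d1y.const_mul β)).sub dx).sub dy).congr_deriv ?_
  ring

theorem hasDerivAt_logBetaKernel (c : ℝ) {s : ℝ} (hs : s ≠ 0) (h1s : 1 - s ≠ 0) :
    HasDerivAt (logBetaKernel c) (c / s - (2 - c) / (1 - s)) s := by
  have d1 := (hasDerivAt_log h1s).comp s ((hasDerivAt_id s).const_sub 1)
  refine (((hasDerivAt_log hs).const_mul c).add (d1.const_mul (2 - c))).congr_deriv ?_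
  ring

theorem deriv_logBetaKernel_add_reflect_nonneg {c t : ℝ} (ht : 0 < t) (htc : t < c)
    (hc : c ≤ 1) :
    0 ≤ (c / t - (2 - c) / (1 - t)) + (c / (c - t) - (2 - c) / (1 - (c - t))) := by
  have h1t : 0 < 1 - t := by linarith
  have hct : 0 < c - t := by linarith
  have h1ct : 0 < 1 - (c - t) := by linarith
  have key : (c / t - (2 - c) / (1 - t)) + (c / (c - t) - (2 - c) / (1 - (c - t))) =
      (1 - c) * (c - 2 * t) ^ 2 / (t * (c - t) * (1 - t) * (1 - (c - t))) := by
    field_simp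
    ring
  rw [key]
  have : 0 ≤ 1 - c := by linarith
  positivity

theorem antitoneOn_logBetaKernel_reflect_sub {c : ℝ} (hc : c ≤ 1) :
    AntitoneOn (fun t ↦ logBetaKernel c (c - t) - logBetaKernel c t) (Ioc 0 (c / 2)) := by
  have hderiv : ∀ t ∈ Ioc 0 (c / 2),
      HasDerivAt (fun t ↦ logBetaKernel c (c - t) - logBetaKernel c t)
        (-((c / t - (2 - c) / (1 - t)) + (c / (c - t) - (2 - c) / (1 - (c - t))))) t := by
    intro t ⟨ht, htc⟩
    have hreflect := (hasDerivAt_logBetaKernel c (s := c - t) (by linarith) (by linarith)).comp t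
      ((hasDerivAt_id t).const_sub c)
    refine (hreflect.sub (hasDerivAt_logBetaKernel c ht.ne' (by linarith))).congr_deriv ?_
    ring
  refine antitoneOn_of_hasDerivWithinAt_nonpos (convex_Ioc 0 (c / 2))
    (fun t ht ↦ (hderiv t ht).continuousAt.continuousWithinAt)
    (fun t ht ↦ (hderiv t (interior_subset ht)).hasDerivWithinAt) fun t ht ↦ ?_
  rw [interior_Ioc] at ht
  exact neg_nonpos.2 (deriv_logBetaKernel_add_reflect_nonneg ht.1 (by linarith [ht.1, ht.2]) hc)

theorem logBetaKernel_le_reflect {c t : ℝ} (hc : c ≤ 1) (ht : t ∈ Ioc 0 (c / 2)) :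
    logBetaKernel c t ≤ logBetaKernel c (c - t) := by
  have hhalf : c / 2 ∈ Ioc 0 (c / 2) := ⟨ht.1.trans_le ht.2, le_rfl⟩
  have := antitoneOn_logBetaKernel_reflect_sub hc ht hhalf ht.2
  simp only [sub_half, sub_self] at this
  linarith

theorem monotoneOn_logPsi {c β : ℝ} (hc : c ≤ 1) (hβ : β = 2 / c - 1) :
    MonotoneOn (logPsi c β) (Icc 0 (c / 2)) := by
  refine monotoneOn_of_hasDerivWithinAt_nonneg (convex_Icc 0 (c / 2))
    (f' := fun x ↦ β * (log (1 - (c - x)) - log (1 - x)) + (log (c - x) - log x))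
    (continuous_logPsi c β).continuousOn (fun x hx ↦ ?_) fun x hx ↦ ?_
  all_goals rw [interior_Icc] at hx; obtain ⟨hx0, hxc⟩ := hx
  · exact (hasDerivAt_logPsi hx0.ne' (by linarith) (by linarith) (by linarith)).hasDerivWithinAt
  · have hc0 : 0 < c := by linarith
    have hscaled : c * (β * (log (1 - (c - x)) - log (1 - x)) + (log (c - x) - log x)) =
        logBetaKernel c (c - x) - logBetaKernel c x := by
      rw [hβ, logBetaKernel, logBetaKernel]
      field_simp
      ring
    refine (mul_nonneg_iff_of_pos_left hc0).1 ?_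
    rw [hscaled, sub_nonneg]
    exact logBetaKernel_le_reflect hc ⟨hx0, hxc.le⟩

/-- Calculus lemma, extremal case: for `0 < c < 1` and `β = 2/c - 1`, the
function `ψ` attains its minimum on `[0, c]` at the endpoints:
`ψ(x) ≥ ψ(0) = ψ(c) = (1-c)^(β(1-c)) / c^c` for all `x ∈ [0, c]`. -/
theorem psi_min_endpoints (c β : ℝ) (hc0 : 0 < c) (hc1 : c < 1)
    (hβ : β = 2 / c - 1) :
    (∀ x ∈ Set.Icc (0 : ℝ) c,
      (1 - c) ^ (β * (1 - c)) / c ^ c ≤ psiFn c β x) ∧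
    psiFn c β 0 = (1 - c) ^ (β * (1 - c)) / c ^ c ∧
    psiFn c β c = (1 - c) ^ (β * (1 - c)) / c ^ c := by
  have hleft : ∀ x ∈ Icc 0 (c / 2), psiFn c β 0 ≤ psiFn c β x := fun x hx ↦ by
    rw [psiFn_eq_exp_logPsi hc1 ⟨le_rfl, hc0.le⟩,
      psiFn_eq_exp_logPsi hc1 ⟨hx.1, by linarith [hx.2]⟩]
    exact exp_le_exp.2 (monotoneOn_logPsi hc1.le hβ ⟨le_rfl, by linarith⟩ hx hx.1)
  refine ⟨fun x hx ↦ ?_, psiFn_zero c β, psiFn_self c β⟩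
  rw [← psiFn_zero c β]
  rcases le_total x (c / 2) with h | h
  · exact hleft x ⟨hx.1, h⟩
  · rw [← psiFn_sub_self c β x]
    exact hleft (c - x) ⟨by linarith [hx.2], by linarith⟩
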